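/- For every pair of integers m and n where m ≥ 3, m is divisible by 3, and n ∈ {4,5}, the star chromatic number of the tensor product satisfies χ_s(C_m × P_n) = 4. -/

import Mathlib

/-- The tensor (categorical) product of two simple graphs: `(u,v)` and `(u',v')` are
adjacent iff `u` is adjacent to `u'` in `G` and `v` is adjacent to `v'` in `H`. -/
def SimpleGraph.tensorProd {α β : Type*} (G : SimpleGraph α) (H : SimpleGraph β) :
    SimpleGraph (α × β) where
  Adj x y := G.Adj x.1 y.1 ∧ H.Adj x.2 y.2
  symm := ⟨fun _ _ h => ⟨h.1.symm, h.2.symm⟩⟩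
  loopless := ⟨fun x h => G.loopless.irrefl x.1 h.1⟩

/-- A star coloring of `G` with colors in `Fin n`: a proper coloring such that every
path on four vertices (i.e. of length three) uses at least three distinct colors. -/
def SimpleGraph.IsStarColoring {α : Type*} (G : SimpleGraph α) {n : ℕ} (f : α → Fin n) : Prop :=
  (∀ ⦃u v : α⦄, G.Adj u v → f u ≠ f v) ∧
  ∀ (u v : α) (p : G.Walk u v), p.IsPath → p.length = 3 →
    3 ≤ (p.support.map f).toFinset.card

/-- The star chromatic number of `G`: the least number of colors in a star coloring. -/
noncomputable def SimpleGraph.starChromaticNumber {α : Type*} (G : SimpleGraph α) : ℕ :=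
  sInf {n : ℕ | ∃ f : α → Fin n, G.IsStarColoring f}

open SimpleGraph

/-!
Upper bound: on `K₃ × P₅`, colour the two end columns `0` and every other vertex by `1 + ` its
`K₃`-coordinate; this is a star colouring. Since `3 ∣ m`, `(i, j) ↦ (i mod 3, j)` is a
homomorphism `C_m × P_n → K₃ × P₅` that is injective on every neighbourhood, and such
homomorphisms pull star colourings back: a bicoloured `P₄` upstairs maps to a bicoloured `P₄`
or to a triangle downstairs.

Lower bound: if `G` and `H` both contain walks `x₀x₁x₂x₃` with `x₀ ≠ x₂` and `x₁ ≠ x₃`, then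
`G × H` contains a 4-cycle `BCFD` with pendant vertices `A` at `B` and `E` at `C`. With three
colours one diagonal of the cycle, say `B, F`, is monochromatic; then `A` must avoid the colours
of `B`, `C` and `D`, which are pairwise distinct, so a fourth colour is needed.
-/

theorem Finset.three_le_card_quadruple_iff {γ : Type*} [DecidableEq γ] {x y z w : γ}
    (hxy : x ≠ y) (hyz : y ≠ z) (hzw : z ≠ w) :
    3 ≤ ({x, y, z, w} : Finset γ).card ↔ ¬(x = z ∧ y = w) := by
  constructor
  · rintro h ⟨rfl, rfl⟩
    have hpair : ({x, y, x, y} : Finset γ) = {x, y} := by ext; simp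
    have := Finset.card_le_two (a := x) (b := y)
    rw [hpair] at h
    omega
  · intro h
    by_cases hxz : x = z
    · calc 3 = ({y, z, w} : Finset γ).card :=
            (Finset.card_eq_three.2 ⟨y, z, w, hyz, fun hyw => h ⟨hxz, hyw⟩, hzw, rfl⟩).symm
        _ ≤ _ := Finset.card_le_card (Finset.subset_insert _ _)
    · calc 3 = ({x, y, z} : Finset γ).card :=
            (Finset.card_eq_three.2 ⟨x, y, z, hxy, hxz, hyz, rfl⟩).symm
        _ ≤ _ := Finset.card_le_card fun t => by
          simp only [Finset.mem_insert, Finset.mem_singleton]; tauto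

theorem Fin.four_le_of_pairwise_ne {k : ℕ} {w x y z : Fin k} (hwx : w ≠ x) (hwy : w ≠ y)
    (hwz : w ≠ z) (hxy : x ≠ y) (hxz : x ≠ z) (hyz : y ≠ z) : 4 ≤ k := by
  simp only [ne_eq, Fin.ext_iff] at *
  omega

namespace SimpleGraph

variable {α β : Type*} {G : SimpleGraph α} {H : SimpleGraph β} {k : ℕ}

theorem Walk.exists_eq_cons_of_length_eq_three {u v : α}
    (p : G.Walk u v) (hp : p.length = 3) :
    ∃ (b c : α) (hub : G.Adj u b) (hbc : G.Adj b c) (hcv : G.Adj c v),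
      p = .cons hub (.cons hbc (.cons hcv .nil)) := by
  rcases p with _ | ⟨hub, _ | ⟨hbc, _ | ⟨hcv, _ | ⟨_, _⟩⟩⟩⟩ <;> simp_all

theorem isStarColoring_iff {f : α → Fin k} :
    G.IsStarColoring f ↔ (∀ ⦃u v⦄, G.Adj u v → f u ≠ f v) ∧
      ∀ ⦃a b c d⦄, G.Adj a b → G.Adj b c → G.Adj c d → a ≠ c → b ≠ d → a ≠ d →
        f a = f c → f b ≠ f d := by
  refine and_congr_right fun hproper => ⟨fun hstar a b c d hab hbc hcd hac hbd had => ?_,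
    fun hbi u v p hp hlen => ?_⟩
  · have hpath : (Walk.cons hab (.cons hbc (.cons hcd .nil))).IsPath := by
      simp [Walk.isPath_def, hab.ne, hbc.ne, hcd.ne, hac, hbd, had]
    have := hstar a d _ hpath rfl
    simp only [Walk.support_cons, Walk.support_nil, List.map_cons, List.map_nil,
      List.toFinset_cons, List.toFinset_nil, insert_empty_eq] at this
    rw [Finset.three_le_card_quadruple_iff (hproper hab) (hproper hbc) (hproper hcd)] at this
    exact fun h1 h2 => this ⟨h1, h2⟩
  · obtain ⟨b, c, hub, hbc, hcv, rfl⟩ := p.exists_eq_cons_of_length_eq_three hlen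
    simp only [Walk.isPath_def, Walk.support_cons, Walk.support_nil, List.nodup_cons,
      List.mem_cons, List.not_mem_nil, or_false, not_or, List.nodup_nil, and_true] at hp
    simp only [Walk.support_cons, Walk.support_nil, List.map_cons, List.map_nil,
      List.toFinset_cons, List.toFinset_nil, insert_empty_eq]
    rw [Finset.three_le_card_quadruple_iff (hproper hub) (hproper hbc) (hproper hcv)]
    exact fun h => hbi hub hbc hcv (by tauto) (by tauto) (by tauto) h.1 h.2

theorem starChromaticNumber_eq (h : ∃ f : α → Fin k, G.IsStarColoring f)
    (h' : ∀ j (f : α → Fin j), G.IsStarColoring f → k ≤ j) : G.starChromaticNumber = k :=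
  le_antisymm (Nat.sInf_le h) (le_csInf ⟨k, h⟩ fun j ⟨f, hf⟩ => h' j f hf)

def Hom.IsLocallyInjective (φ : G →g H) : Prop :=
  ∀ ⦃v u w⦄, G.Adj v u → G.Adj v w → φ u = φ w → u = w

theorem Embedding.isLocallyInjective_toHom (φ : G ↪g H) : φ.toHom.IsLocallyInjective :=
  fun _ _ _ _ _ h => φ.injective h

theorem IsStarColoring.comp_hom {f : β → Fin k} (hf : H.IsStarColoring f) {φ : G →g H}
    (hφ : φ.IsLocallyInjective) : G.IsStarColoring (f ∘ φ) := by
  obtain ⟨hproper, hbi⟩ := isStarColoring_iff.1 hf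
  refine isStarColoring_iff.2
    ⟨fun u v h => hproper (φ.map_adj h), fun a b c d hab hbc hcd hac hbd _ hfac => ?_⟩
  by_cases had : φ a = φ d
  · exact absurd (had ▸ hfac) (hproper (φ.map_adj hcd)).symm
  · exact hbi (φ.map_adj hab) (φ.map_adj hbc) (φ.map_adj hcd) (mt (hφ hab.symm hbc) hac)
      (mt (hφ hbc.symm hcd) hbd) had hfac

def Hom.tensorProd {α' β' : Type*} {G' : SimpleGraph α'} {H' : SimpleGraph β'} (φ : G →g G')
    (ψ : H →g H') : G.tensorProd H →g G'.tensorProd H' where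
  toFun := Prod.map φ ψ
  map_rel' h := ⟨φ.map_adj h.1, ψ.map_adj h.2⟩

theorem Hom.IsLocallyInjective.tensorProd {α' β' : Type*} {G' : SimpleGraph α'}
    {H' : SimpleGraph β'} {φ : G →g G'} {ψ : H →g H'} (hφ : φ.IsLocallyInjective)
    (hψ : ψ.IsLocallyInjective) : (φ.tensorProd ψ).IsLocallyInjective :=
  fun _ _ _ hu hw h =>
    Prod.ext (hφ hu.1 hw.1 (congrArg Prod.fst h)) (hψ hu.2 hw.2 (congrArg Prod.snd h))

theorem cycleGraph_adj_iff_val {m : ℕ} (hm : 2 ≤ m) {u v : Fin m} :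
    (cycleGraph m).Adj u v ↔ u.val + 1 = v.val ∨ v.val + 1 = u.val ∨
      (u.val = 0 ∧ v.val + 1 = m) ∨ (v.val = 0 ∧ u.val + 1 = m) := by
  rw [cycleGraph_adj']
  rcases lt_trichotomy u v with huv | rfl | hvu
  · rw [Fin.coe_sub_iff_lt.2 huv, Fin.sub_val_of_le huv.le]
    rw [Fin.lt_def] at huv
    omega
  · rw [Fin.sub_val_of_le le_rfl]
    omega
  · rw [Fin.coe_sub_iff_lt.2 hvu, Fin.sub_val_of_le hvu.le]
    rw [Fin.lt_def] at hvu
    omega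

def cycleGraph.coloringModThree {m : ℕ} (hdvd : 3 ∣ m) : (cycleGraph m).Coloring (Fin 3) :=
  Coloring.mk (fun v => ⟨v.val % 3, Nat.mod_lt _ three_pos⟩) fun {u v} h => by
    have hm : 2 ≤ m := by have := Fin.val_ne_of_ne h.ne; omega
    rw [cycleGraph_adj_iff_val hm] at h
    show ¬(⟨u.val % 3, _⟩ : Fin 3) = ⟨v.val % 3, _⟩
    rw [Fin.mk.injEq]
    omega

theorem cycleGraph.isLocallyInjective_coloringModThree {m : ℕ} (hdvd : 3 ∣ m) :
    (cycleGraph.coloringModThree hdvd).IsLocallyInjective := by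
  intro v u w hu hw h
  have hm : 2 ≤ m := by have := Fin.val_ne_of_ne hu.ne; omega
  rw [cycleGraph_adj_iff_val hm] at hu hw
  have h' : u.val % 3 = w.val % 3 := congrArg Fin.val h
  ext
  omega

def pathGraph.castLEEmbedding {n n' : ℕ} (h : n ≤ n') : pathGraph n ↪g pathGraph n' :=
  { Fin.castLEEmb h with map_rel_iff' := by simp [pathGraph_adj] }

def topTensorPathFiveColoring : Fin 3 × Fin 5 → Fin 4 :=
  fun x => if x.2.val = 0 ∨ x.2.val = 4 then 0 else x.1.succ

theorem topTensorPathFiveColoring_eq_iff {x y : Fin 3 × Fin 5} :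
    topTensorPathFiveColoring x = topTensorPathFiveColoring y ↔
      ((x.2.val = 0 ∨ x.2.val = 4) ∧ (y.2.val = 0 ∨ y.2.val = 4)) ∨
      (x.2.val ≠ 0 ∧ x.2.val ≠ 4 ∧ y.2.val ≠ 0 ∧ y.2.val ≠ 4 ∧ x.1.val = y.1.val) := by
  simp only [topTensorPathFiveColoring]
  split_ifs <;> simp only [Fin.ext_iff, Fin.val_succ, Fin.val_zero, true_iff] <;> omega

theorem isStarColoring_topTensorPathFiveColoring :
    ((⊤ : SimpleGraph (Fin 3)).tensorProd (pathGraph 5)).IsStarColoring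
      topTensorPathFiveColoring := by
  refine isStarColoring_iff.2 ⟨?_, ?_⟩
  · rintro ⟨r, j⟩ ⟨r', j'⟩ ⟨hr, hj⟩
    rw [top_adj, Ne, Fin.ext_iff] at hr
    rw [pathGraph_adj] at hj
    rw [Ne, topTensorPathFiveColoring_eq_iff]
    omega
  · rintro ⟨ra, ja⟩ ⟨rb, jb⟩ ⟨rc, jc⟩ ⟨rd, jd⟩ ⟨-, hab⟩ ⟨-, hbc⟩ ⟨-, hcd⟩ hac hbd -
    simp only [pathGraph_adj] at hab hbc hcd
    simp only [ne_eq, Prod.mk.injEq, Fin.ext_iff] at hac hbd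
    rw [Ne, topTensorPathFiveColoring_eq_iff, topTensorPathFiveColoring_eq_iff]
    dsimp only
    omega

theorem IsStarColoring.four_le_of_square_of_eq {f : α → Fin k} (hf : G.IsStarColoring f)
    {a b c d e : α} (hab : G.Adj a b) (hbc : G.Adj b c) (hce : G.Adj c e) (hed : G.Adj e d)
    (hdb : G.Adj d b) (hbe : b ≠ e) (hcd : c ≠ d) (hac : a ≠ c) (had : a ≠ d) (hae : a ≠ e)
    (hfbe : f b = f e) : 4 ≤ k := by
  obtain ⟨hproper, hbi⟩ := isStarColoring_iff.1 hf
  have hfcd : f c ≠ f d := hbi hbc hce hed hbe hcd hdb.ne.symm hfbe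
  have hfac : f a ≠ f c := fun h => hbi hab hbc hce hac hbe hae h hfbe
  have hfad : f a ≠ f d := fun h => hbi hab hdb.symm hed.symm had hbe hae h hfbe
  exact Fin.four_le_of_pairwise_ne (hproper hab) hfac hfad (hproper hbc) (hproper hdb).symm hfcd

theorem IsStarColoring.four_le_of_tensorProd {f : α × β → Fin k}
    (hf : (G.tensorProd H).IsStarColoring f) {r₀ r₁ r₂ r₃ : α} (hr₀₁ : G.Adj r₀ r₁)
    (hr₁₂ : G.Adj r₁ r₂) (hr₂₃ : G.Adj r₂ r₃) (hr₀₂ : r₀ ≠ r₂) (hr₁₃ : r₁ ≠ r₃)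
    {c₀ c₁ c₂ c₃ : β} (hc₀₁ : H.Adj c₀ c₁) (hc₁₂ : H.Adj c₁ c₂) (hc₂₃ : H.Adj c₂ c₃)
    (hc₀₂ : c₀ ≠ c₂) (hc₁₃ : c₁ ≠ c₃) : 4 ≤ k := by
  set A := (r₀, c₃); set B := (r₁, c₂); set C := (r₂, c₁)
  set D := (r₂, c₃); set E := (r₃, c₀); set F := (r₃, c₂)
  have hAB : (G.tensorProd H).Adj A B := ⟨hr₀₁, hc₂₃.symm⟩
  have hBC : (G.tensorProd H).Adj B C := ⟨hr₁₂, hc₁₂.symm⟩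
  have hBD : (G.tensorProd H).Adj B D := ⟨hr₁₂, hc₂₃⟩
  have hCE : (G.tensorProd H).Adj C E := ⟨hr₂₃, hc₀₁.symm⟩
  have hCF : (G.tensorProd H).Adj C F := ⟨hr₂₃, hc₁₂⟩
  have hDF : (G.tensorProd H).Adj D F := ⟨hr₂₃, hc₂₃.symm⟩
  have hBF : B ≠ F := ne_of_apply_ne Prod.fst hr₁₃
  have hCD : C ≠ D := ne_of_apply_ne Prod.snd hc₁₃
  by_cases hfBF : f B = f F
  · exact hf.four_le_of_square_of_eq hAB hBC hCF hDF.symm hBD.symm hBF hCD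
      (ne_of_apply_ne Prod.snd hc₁₃.symm) (ne_of_apply_ne Prod.fst hr₀₂)
      (ne_of_apply_ne Prod.snd hc₂₃.ne.symm) hfBF
  by_cases hfCD : f C = f D
  · exact hf.four_le_of_square_of_eq hCE.symm hBC.symm hBD hDF hCF.symm hCD hBF
      (ne_of_apply_ne Prod.snd hc₀₂) (ne_of_apply_ne Prod.snd hc₀₂)
      (ne_of_apply_ne Prod.fst hr₂₃.ne.symm) hfCD
  have hproper := (isStarColoring_iff.1 hf).1
  exact Fin.four_le_of_pairwise_ne (hproper hBC) hfBF (hproper hBD) (hproper hCF)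
    hfCD (hproper hDF).symm

end SimpleGraph

theorem starChromaticNumber_C3k_tensorProd_Pn (m n : ℕ)
    (hm : 3 ≤ m) (hdvd : 3 ∣ m) (hn : n = 4 ∨ n = 5) :
    ((cycleGraph m).tensorProd (pathGraph n)).starChromaticNumber = 4 := by
  refine starChromaticNumber_eq ?_ fun k f hf => ?_
  · exact ⟨_, isStarColoring_topTensorPathFiveColoring.comp_hom
      ((cycleGraph.isLocallyInjective_coloringModThree hdvd).tensorProd
        (pathGraph.castLEEmbedding (by omega)).isLocallyInjective_toHom)⟩
  · have hm2 : 2 ≤ m := by omega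
    refine hf.four_le_of_tensorProd (r₀ := (⟨2, by omega⟩ : Fin m)) (r₁ := ⟨1, by omega⟩)
      (r₂ := ⟨0, by omega⟩) (r₃ := ⟨m - 1, by omega⟩) (c₀ := (⟨0, by omega⟩ : Fin n))
      (c₁ := ⟨1, by omega⟩) (c₂ := ⟨2, by omega⟩) (c₃ := ⟨3, by omega⟩)
      ?_ ?_ ?_ ?_ ?_ ?_ ?_ ?_ ?_ ?_
    all_goals simp [cycleGraph_adj_iff_val hm2, pathGraph_adj, Fin.ext_iff] <;> omega
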